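/- Let σ = (λ₁,...,λ₅) be real with λ₁ ≥ λ₂ ≥ λ₃ ≥ λ₄ ≥ λ₅ ≥ -λ₁, e₁(σ) ≥ 0, λ₃ > e₁(σ), and suppose Q_σ(e₁(σ)/2) = 0, where Q_σ(z) = 2z³ - 2(λ₃+λ₅)z² - (e₂(σ)+(λ₃-λ₅)²)z + e₃(σ) + e₁(σ)(λ₃²+λ₅²). Then λ₁ - λ₂ - λ₃ + λ₄ - λ₅ > 0. -/

import Mathlib

/-!
At `z = e₁/2`, `-4 Q_σ(z)` is a sum of three products of linear forms in the `λᵢ`. If `λ₁ - λ₂ - λ₃ + λ₄ - λ₅ ≤ 0`, the ordering makes every factor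
nonnegative and the first product strictly positive, so `Q_σ(e₁/2) < 0`.
-/

/-- `Q_σ(z)` from the paper. -/
def Qpoly (l1 l2 l3 l4 l5 z : ℝ) : ℝ :=
  2*z^3 - 2*(l3 + l5)*z^2
    - ((l1*l2+l1*l3+l1*l4+l1*l5+l2*l3+l2*l4+l2*l5+l3*l4+l3*l5+l4*l5) + (l3 - l5)^2) * z
    + (l1*l2*l3+l1*l2*l4+l1*l2*l5+l1*l3*l4+l1*l3*l5+l1*l4*l5+l2*l3*l4+l2*l3*l5+l2*l4*l5+l3*l4*l5)
    + (l1 + l2 + l3 + l4 + l5) * (l3^2 + l5^2)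

theorem neg_four_mul_Qpoly_half_sum (l1 l2 l3 l4 l5 : ℝ) :
    -4 * Qpoly l1 l2 l3 l4 l5 ((l1 + l2 + l3 + l4 + l5) / 2) =
      (l3 - (l1 + l2 + l4 + l5)) * (l1 + l4 - l5) * (l1 + l2 - l3 + l4 - l5)
      + -(l1 - l2 - l3 + l4 - l5) * (l1 + l2 - l3) * (l1 - l2 + l3 - l4 + l5)
      + l1 * -(l1 - l2 - l3 + l4 - l5) * (l3 - (l1 + l2 + l4 + l5)) := by
  unfold Qpoly
  ring

theorem Qpoly_half_sum_neg {l1 l2 l3 l4 l5 : ℝ}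
    (h23 : l2 ≥ l3) (h45 : l4 ≥ l5) (h5 : l5 ≥ -l1)
    (h3 : l3 > l1 + l2 + l3 + l4 + l5) (hle : l1 - l2 - l3 + l4 - l5 ≤ 0) :
    Qpoly l1 l2 l3 l4 l5 ((l1 + l2 + l3 + l4 + l5) / 2) < 0 := by
  have hH : 0 < l3 - (l1 + l2 + l4 + l5) := by linarith
  have hl1 : 0 < l1 := by linarith
  have hB : 0 ≤ -(l1 - l2 - l3 + l4 - l5) := by linarith
  have first : 0 < (l3 - (l1 + l2 + l4 + l5)) * (l1 + l4 - l5) * (l1 + l2 - l3 + l4 - l5) :=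
    mul_pos (mul_pos hH (by linarith)) (by linarith)
  have second : 0 ≤ -(l1 - l2 - l3 + l4 - l5) * (l1 + l2 - l3) * (l1 - l2 + l3 - l4 + l5) :=
    mul_nonneg (mul_nonneg hB (by linarith)) (by linarith)
  have third : 0 ≤ l1 * -(l1 - l2 - l3 + l4 - l5) * (l3 - (l1 + l2 + l4 + l5)) :=
    mul_nonneg (mul_nonneg hl1.le hB) hH.le
  linarith [neg_four_mul_Qpoly_half_sum l1 l2 l3 l4 l5]

theorem stmt16_general (l1 l2 l3 l4 l5 : ℝ)
    (h23 : l2 ≥ l3) (h45 : l4 ≥ l5) (h5 : l5 ≥ -l1)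
    (h3 : l3 > l1 + l2 + l3 + l4 + l5)
    (hQ : Qpoly l1 l2 l3 l4 l5 ((l1 + l2 + l3 + l4 + l5) / 2) = 0) :
    l1 - l2 - l3 + l4 - l5 > 0 := by
  by_contra! hle
  exact (Qpoly_half_sum_neg h23 h45 h5 h3 hle).ne hQ

theorem stmt16 (l1 l2 l3 l4 l5 : ℝ)
    (h12 : l1 ≥ l2) (h23 : l2 ≥ l3) (h34 : l3 ≥ l4) (h45 : l4 ≥ l5) (h5 : l5 ≥ -l1)
    (he1 : l1 + l2 + l3 + l4 + l5 ≥ 0)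
    (h3 : l3 > l1 + l2 + l3 + l4 + l5)
    (hQ : Qpoly l1 l2 l3 l4 l5 ((l1 + l2 + l3 + l4 + l5) / 2) = 0) :
    l1 - l2 - l3 + l4 - l5 > 0 :=
  stmt16_general l1 l2 l3 l4 l5 h23 h45 h5 h3 hQ
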